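/- arXiv:2203.00076 — 3 statements merged into one kernel-verified Lean document; each statement's English description precedes it below -/
import Mathlib

section
/- For any positive reals x, y, z with x^y ≤ z · log x, it holds that x < ((2z/y) · log(2z/y))^{1/y} and moreover ((2z/y) · log(2z/y))^{1/y} < (2z/y)^{2/y}. -/
/-! Put `t = x ^ y` and `b = 2z/y`, so that the hypothesis reads `2t ≤ b log t`. Splitting
`log t = log b + log (t/b)` and using `log u ≤ u - 1` gives `2t ≤ b log b + t - b`, hence
`t < b log b`; and `b log b < b²` because `log b < b`. Taking `1/y`-th powers gives both bounds. -/

open Real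

lemma Real.lt_mul_log_of_two_mul_le_mul_log {b t : ℝ} (hb : 0 < b) (ht : 0 < t)
    (h : 2 * t ≤ b * log t) : t < b * log b := by
  have hquot : log (t / b) ≤ t / b - 1 := log_le_sub_one_of_pos (div_pos ht hb)
  rw [log_div ht.ne' hb.ne'] at hquot
  have : b * (log t - log b) ≤ t - b := by
    calc b * (log t - log b) ≤ b * (t / b - 1) := mul_le_mul_of_nonneg_left hquot hb.le
      _ = t - b := by field_simp
  linarith

lemma Real.mul_log_lt_sq {b : ℝ} (hb : 0 < b) : b * log b < b ^ 2 := by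
  have : log b < b := by linarith [log_le_sub_one_of_pos hb]
  nlinarith

/-- Log-inversion lemma: if x^y ≤ z·log x for positive reals x, y, z, then
    x < ((2z/y)·log(2z/y))^{1/y} and ((2z/y)·log(2z/y))^{1/y} < (2z/y)^{2/y}. -/
theorem stmt_1 (x y z : ℝ) (hx : 0 < x) (hy : 0 < y) (hz : 0 < z)
    (h : x ^ y ≤ z * Real.log x) :
    x < ((2 * z / y) * Real.log (2 * z / y)) ^ (1 / y) ∧
      ((2 * z / y) * Real.log (2 * z / y)) ^ (1 / y) < (2 * z / y) ^ (2 / y) := by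
  set b := 2 * z / y
  have hb : 0 < b := by positivity
  have ht : 0 < x ^ y := rpow_pos_of_pos hx y
  have hpow : 2 * x ^ y ≤ b * log (x ^ y) := by
    rw [log_rpow hx]
    calc 2 * x ^ y ≤ 2 * (z * log x) := by linarith
      _ = b * (y * log x) := by simp only [b]; field_simp
  have hmain : x ^ y < b * log b := lt_mul_log_of_two_mul_le_mul_log hb ht hpow
  have hy' : 0 < 1 / y := by positivity
  constructor
  · calc x = (x ^ y) ^ (1 / y) := by rw [← rpow_mul hx.le, mul_one_div_cancel hy.ne', rpow_one]
      _ < (b * log b) ^ (1 / y) := rpow_lt_rpow ht.le hmain hy'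
  · calc (b * log b) ^ (1 / y) < (b ^ 2) ^ (1 / y) :=
          rpow_lt_rpow (by linarith) (mul_log_lt_sq hb) hy'
      _ = b ^ (2 / y) := by
          rw [← rpow_two, ← rpow_mul hb.le, mul_one_div]
end

section
/- Define J_1 = 2^8 and J_{l+1} = (J_l + 2)^2, and let h(j) = 12·log(j)/(j − 2). Then for every integer l ≥ 2, h(J_l) < 2^{-2^{l+1}}. -/
/-!
Write `h j = 12 log j / (j - 2)`. Since `log ((a + 2)^2) ≤ 4 log a` and `(a + 2)^2 - 2 > a (a - 2)`,
one step of the recursion gives `h (J (l+1)) < (4 / J l) · h (J l)`. The doubly exponential growth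
`J l ≥ 2^(2^(l+2))` then turns the bound `h (J l) < 2^(-2^(l+1))` into
`h (J (l+1)) < 4 · 2^(-2^(l+2)) · 2^(-2^(l+1)) ≤ 2^(-2^(l+2))`; the base case is `h 66564 < 12 · 17 / 2^16`.
-/

open Real

lemma log_sq_add_two_le {a : ℝ} (ha : 2 ≤ a) : log ((a + 2) ^ 2) ≤ 4 * log a := by
  have hle : a + 2 ≤ a ^ 2 := by nlinarith
  calc log ((a + 2) ^ 2) = 2 * log (a + 2) := by rw [log_pow]; norm_num
    _ ≤ 2 * log (a ^ 2) := by gcongr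
    _ = 4 * log a := by rw [log_pow]; ring

lemma log_div_sub_two_sq_add_two_lt {a : ℝ} (ha : 2 < a) :
    log ((a + 2) ^ 2) / ((a + 2) ^ 2 - 2) < 4 / a * (log a / (a - 2)) := by
  have hlog : 0 < log a := log_pos (by linarith)
  have hden : 0 < a * (a - 2) := mul_pos (by linarith) (by linarith)
  calc log ((a + 2) ^ 2) / ((a + 2) ^ 2 - 2) ≤ 4 * log a / ((a + 2) ^ 2 - 2) := by
        gcongr
        · nlinarith
        · exact log_sq_add_two_le ha.le
    _ < 4 * log a / (a * (a - 2)) := by gcongr; nlinarith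
    _ = 4 / a * (log a / (a - 2)) := by field_simp

lemma two_pow_two_pow_le {J : ℕ → ℕ} (h1 : 2 ^ 8 ≤ J 1) (hsq : ∀ l, 1 ≤ l → J l ^ 2 ≤ J (l + 1))
    (l : ℕ) (hl : 1 ≤ l) : 2 ^ 2 ^ (l + 2) ≤ J l := by
  induction l, hl using Nat.le_induction with
  | base => exact h1
  | succ n hn ih =>
    calc 2 ^ 2 ^ (n + 1 + 2) = (2 ^ 2 ^ (n + 2)) ^ 2 := by rw [← pow_mul, ← pow_succ]
      _ ≤ J n ^ 2 := by gcongr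
      _ ≤ J (n + 1) := hsq n hn

lemma twelve_log_div_sub_two_lt_at_66564 :
    12 * log 66564 / ((66564 : ℝ) - 2) < 1 / 2 ^ 2 ^ 3 := by
  have hlog : log 66564 < 17 := by
    calc log 66564 < log (2 ^ 17) := log_lt_log (by norm_num) (by norm_num)
      _ = 17 * log 2 := by rw [log_pow]; norm_num
      _ < 17 := by linarith [log_two_lt_d9]
  rw [div_lt_div_iff₀ (by norm_num) (by norm_num)]
  norm_num
  linarith

/-- With J_1 = 2^8, J_{l+1} = (J_l + 2)^2, and h(j) = 12·log(j)/(j − 2):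
    for every l ≥ 2, h(J_l) < 2^{−2^{l+1}}. -/
theorem stmt_8 (J : ℕ → ℕ) (h1 : J 1 = 2 ^ 8) (hrec : ∀ l : ℕ, 1 ≤ l → J (l + 1) = (J l + 2) ^ 2)
    (l : ℕ) (hl : 2 ≤ l) :
    12 * Real.log (J l) / ((J l : ℝ) - 2) < 1 / 2 ^ (2 ^ (l + 1)) := by
  have hgrowth := two_pow_two_pow_le h1.ge fun l hl => (hrec l hl).ge.trans' (by gcongr; omega)
  induction l, hl using Nat.le_induction with
  | base =>
    rw [hrec 1 le_rfl, h1]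
    exact_mod_cast twelve_log_div_sub_two_lt_at_66564
  | succ n hn ih =>
    set S : ℝ := 2 ^ 2 ^ (n + 1)
    have hS : 4 ≤ S :=
      calc (4 : ℝ) = 2 ^ 2 := by norm_num
        _ ≤ S := pow_le_pow_right₀ (by norm_num) (Nat.le_self_pow (by omega) 2)
    have ha : S ^ 2 ≤ J n := by
      rw [← pow_mul, ← pow_succ]
      exact_mod_cast hgrowth n (by omega)
    have hJpos : (0 : ℝ) < J n := by nlinarith
    rw [hrec n (by omega)]
    push_cast
    rw [mul_div_assoc] at ih ⊢
    calc 12 * (log ((J n + 2) ^ 2) / (((J n : ℝ) + 2) ^ 2 - 2))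
        < 12 * (4 / J n * (log (J n) / (J n - 2))) := by
          gcongr
          exact log_div_sub_two_sq_add_two_lt (by nlinarith)
      _ = 4 / J n * (12 * (log (J n) / (J n - 2))) := by ring
      _ < 4 / J n * (1 / S) := by gcongr
      _ ≤ 1 / 2 ^ 2 ^ (n + 1 + 1) := by
          rw [pow_succ 2 (n + 1), pow_mul, div_mul_div_comm, div_le_div_iff₀ (by positivity) (by positivity)]
          nlinarith
end

section
/- Let A ⊆ ℝ be a finite set with |A| ≤ K for some K ≥ 1, and let (a_j)_{j≥0} be a sequence taking values in A such that a_{j+1} ≥ a_j − δ_j for every j, where δ_j ≥ 0. Then for any indices j ≤ j', a_{j'} ≥ a_j − (K − 1) · sup_{j ≤ j'' < j'} δ_{j''}. -/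
/-!
Let `c` be the number of distinct values among `a j, …, a i`. By induction on `i`, every one of
these values is at least `a j - (c - 1) D`, where `D` bounds the one-step decreases: a step either
revisits an earlier value, which satisfies the bound already, or produces a new value, which
raises `c` by one and so pays for the one-step loss of at most `D`. Finally `c ≤ #A ≤ K`.
-/

open Finset

theorem sub_card_image_range_mul_le {α : Type*} [Field α] [LinearOrder α]
    [IsStrictOrderedRing α] {a : ℕ → α} {D : α} (hD : 0 ≤ D) (n : ℕ) (hstep : ∀ i < n, a i - D ≤ a (i + 1)) :
    ∀ i ≤ n, a 0 - ((#((range (n + 1)).image a) : α) - 1) * D ≤ a i := by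
  induction n with
  | zero =>
    intro i hi
    obtain rfl : i = 0 := Nat.le_zero.1 hi
    simp
  | succ n ih =>
    have ih := ih fun i hi => hstep i (Nat.lt_succ_of_lt hi)
    set S := (range (n + 1)).image a
    have himage : (range (n + 2)).image a = insert (a (n + 1)) S := by
      rw [range_add_one, image_insert]
    have hgrow : a 0 - ((#(insert (a (n + 1)) S) : α) - 1) * D ≤ a 0 - ((#S : α) - 1) * D := by
      gcongr
      exact S.subset_insert _
    intro i hi
    rw [himage]
    rcases Nat.lt_or_eq_of_le hi with hi | rfl
    · exact hgrow.trans (ih i (Nat.lt_succ_iff.1 hi))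
    by_cases hmem : a (n + 1) ∈ S
    · obtain ⟨k, hk, hak⟩ := mem_image.1 hmem
      have := hgrow.trans (ih k (Nat.lt_succ_iff.1 (mem_range.1 hk)))
      rwa [hak] at this
    · rw [card_insert_of_notMem hmem, Nat.cast_add, Nat.cast_one]
      linarith [ih n le_rfl, hstep n (Nat.lt_succ_self n)]

theorem stmt_11_general (A : Finset ℝ) (K : ℕ) (hcard : A.card ≤ K)
    (a : ℕ → ℝ) (ha : ∀ j, a j ∈ A) (δ : ℕ → ℝ) (hδ : ∀ j, 0 ≤ δ j)
    (hstep : ∀ j, a (j + 1) ≥ a j - δ j) (j j' : ℕ) (hjj' : j ≤ j') :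
    a j' ≥ a j - ((K : ℝ) - 1) * sSup (δ '' Set.Ico j j') := by
  obtain ⟨n, rfl⟩ := Nat.exists_eq_add_of_le hjj'
  set D := sSup (δ '' Set.Ico j (j + n))
  have hD : 0 ≤ D := Real.sSup_nonneg (by rintro _ ⟨i, -, rfl⟩; exact hδ i)
  have hδD : ∀ i < n, δ (j + i) ≤ D := fun i hi =>
    le_csSup ((Set.finite_Ico _ _).image δ).bddAbove ⟨j + i, ⟨by omega, by omega⟩, rfl⟩
  set b : ℕ → ℝ := fun i => a (j + i)
  have hbound := sub_card_image_range_mul_le (a := b) hD n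
    (fun i hi => by
      show a (j + i) - D ≤ a (j + i + 1)
      linarith [hstep (j + i), hδD i hi]) n le_rfl
  have hvalues : #((range (n + 1)).image b) ≤ K :=
    (card_le_card (image_subset_iff.2 fun i _ => ha (j + i))).trans hcard
  have hcoef : ((#((range (n + 1)).image b) : ℝ) - 1) * D ≤ ((K : ℝ) - 1) * D := by gcongr
  simp only [b, add_zero] at hbound
  linarith

/-- If a sequence takes at most K distinct values and never decreases by more than δ_j in one
    step, then over any interval it decreases by at most (K−1)·sup of the per-step bounds. -/
theorem stmt_11 (A : Finset ℝ) (K : ℕ) (hK : 1 ≤ K) (hcard : A.card ≤ K)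
    (a : ℕ → ℝ) (ha : ∀ j, a j ∈ A) (δ : ℕ → ℝ) (hδ : ∀ j, 0 ≤ δ j)
    (hstep : ∀ j, a (j + 1) ≥ a j - δ j) (j j' : ℕ) (hjj' : j ≤ j') :
    a j' ≥ a j - ((K : ℝ) - 1) * sSup (δ '' Set.Ico j j') :=
  stmt_11_general A K hcard a ha δ hδ hstep j j' hjj'
end
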